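/- Let B_1, …, B_m be events with dependency graph G = ([m], E) such that the B_i are exclusive (Pr(B_i ∩ B_j) = 0 for (i,j) ∈ E). Define, for S ⊆ [m], β(S) = Pr(⋂_{i∈S} B̄_i). Then for any S_1 ⊆ [m] and j ∉ S_1, writing T_1 = S_1 \ Γ_j, we have β(S_1 ∪ {j}) = β(S_1) − Pr(B_j)·β(T_1). -/
import Mathlib


open MeasureTheory ProbabilityTheory Finset

/-- `G` is a dependency graph for the events `B`. -/
def IsDependencyGraph {Ω : Type*} [MeasurableSpace Ω] (μ : Measure Ω)
    {m : ℕ} (G : SimpleGraph (Fin m)) (B : Fin m → Set Ω) : Prop :=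
  ∀ i, Indep (MeasurableSpace.generateFrom {B i})
    (MeasurableSpace.generateFrom ((fun j => B j) '' {j | j ≠ i ∧ ¬ G.Adj i j})) μ

theorem beta_recurrence {Ω : Type*} [MeasurableSpace Ω] (μ : Measure Ω)
    [IsProbabilityMeasure μ] {m : ℕ} (G : SimpleGraph (Fin m)) [DecidableRel G.Adj]
    (B : Fin m → Set Ω) (hBm : ∀ i, MeasurableSet (B i))
    (hdep : IsDependencyGraph μ G B)
    (hexcl : ∀ i j, G.Adj i j → μ (B i ∩ B j) = 0)
    (S₁ : Finset (Fin m)) (j : Fin m) (hj : j ∉ S₁) :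
    (μ (⋂ i ∈ insert j S₁, (B i)ᶜ)).toReal
      = (μ (⋂ i ∈ S₁, (B i)ᶜ)).toReal
        - (μ (B j)).toReal * (μ (⋂ i ∈ S₁ \ G.neighborFinset j, (B i)ᶜ)).toReal := by
  classical
  set T : Finset (Fin m) := S₁ \ G.neighborFinset j with hT
  set A : Set Ω := ⋂ i ∈ S₁, (B i)ᶜ with hA
  set AT : Set Ω := ⋂ i ∈ T, (B i)ᶜ with hAT
  -- independence step
  have hindep : μ (B j ∩ AT) = μ (B j) * μ AT := by
    have h := (Indep_iff _ _ _).1 (hdep j) (B j) AT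
      (MeasurableSpace.measurableSet_generateFrom rfl) ?_
    · exact h
    · apply MeasurableSet.biInter (T : Set (Fin m)).to_countable
      intro i hi
      have hi' := Finset.mem_sdiff.1 (Finset.mem_coe.1 hi)
      have hna : ¬ G.Adj j i := fun h => hi'.2 (SimpleGraph.mem_neighborFinset G j i |>.2 h)
      refine MeasurableSet.compl ?_
      exact MeasurableSpace.measurableSet_generateFrom
        ⟨i, ⟨fun h' => hj (h' ▸ hi'.1), hna⟩, rfl⟩
  -- null difference step
  have hsub : A ⊆ AT := by
    intro x hx
    exact Set.mem_iInter₂.2 fun i hi =>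
      Set.mem_iInter₂.1 hx i (Finset.mem_sdiff.1 hi).1
  have hnull : μ ((B j ∩ AT) \ (B j ∩ A)) = 0 := by
    apply measure_mono_null (t := ⋃ i ∈ S₁ ∩ G.neighborFinset j, B j ∩ B i)
    · rintro x ⟨⟨hxj, hxT⟩, hxA⟩
      have : ∃ i ∈ S₁, x ∈ B i := by
        by_contra hcon
        push_neg at hcon
        exact hxA ⟨hxj, Set.mem_iInter₂.2 fun i hi => hcon i hi⟩
      obtain ⟨i, hiS, hxi⟩ := this
      have hiadj : i ∈ G.neighborFinset j := by
        by_contra hna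
        exact (Set.mem_iInter₂.1 hxT i (Finset.mem_sdiff.2 ⟨hiS, hna⟩)) hxi
      exact Set.mem_biUnion (Finset.mem_inter.2 ⟨hiS, hiadj⟩) ⟨hxj, hxi⟩
    · refine measure_biUnion_null_iff ((S₁ ∩ G.neighborFinset j : Finset _) :
        Set (Fin m)).to_countable |>.2 fun i hi => ?_
      have : G.Adj j i := by
        simp only [Finset.mem_coe, Finset.mem_inter, SimpleGraph.mem_neighborFinset] at hi
        exact hi.2
      exact hexcl j i this
  have hkey : μ (B j ∩ A) = μ (B j ∩ AT) := by
    refine le_antisymm (measure_mono (Set.inter_subset_inter_right _ hsub)) ?_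
    calc μ (B j ∩ AT) ≤ μ ((B j ∩ A) ∪ ((B j ∩ AT) \ (B j ∩ A))) :=
          measure_mono fun x hx => by
            by_cases h : x ∈ B j ∩ A
            · exact Or.inl h
            · exact Or.inr ⟨hx, h⟩
      _ ≤ μ (B j ∩ A) + μ ((B j ∩ AT) \ (B j ∩ A)) := measure_union_le _ _
      _ = μ (B j ∩ A) := by rw [hnull, add_zero]
  -- decomposition
  have hsplit : μ (A ∩ B j) + μ (A \ B j) = μ A := measure_inter_add_diff A (hBm j)
  have hins : (⋂ i ∈ insert j S₁, (B i)ᶜ) = A \ B j := by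
    rw [Finset.set_biInter_insert, hA, Set.diff_eq, Set.inter_comm]
  rw [hins]
  have h1 : μ (A ∩ B j) = μ (B j) * μ AT := by
    rw [Set.inter_comm, hkey, hindep]
  have hfin : ∀ s : Set Ω, μ s ≠ ⊤ := fun s => measure_ne_top μ s
  have := congrArg ENNReal.toReal hsplit
  rw [ENNReal.toReal_add (hfin _) (hfin _), h1, ENNReal.toReal_mul] at this
  linarith
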